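/- arXiv:2404.19155 — 6 statements merged into one kernel-verified Lean document; each statement's English description precedes it below -/
import Mathlib

section
/- Let g ∈ SL(2,ℂ) with all entries g₁₁, g₁₂, g₂₁ nonzero. Then there exist nonzero complex numbers a, b, m such that g = τ(a,b,m), namely a = g₁₁, and m, b can be chosen appropriately. -/
open Matrix

noncomputable def tau (a b m : ℂ) : Matrix (Fin 2) (Fin 2) ℂ :=
  !![a, -(a - m) * b; (a - m⁻¹) / b, m + m⁻¹ - a]

/-!
Take for `m` an eigenvalue of `g`, i.e. a root of `m + m⁻¹ = tr g`. The characteristic polynomial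
at `g₁₁` equals `-g₁₂ g₂₁ ≠ 0`, so `m ≠ g₁₁`, and `b = g₁₂ / (m - g₁₁)` matches the upper right
entry. The lower left entry then matches because `(m - g₁₁)(m - g₂₂) = g₁₂ g₂₁`.
-/

theorem exists_ne_zero_add_inv_eq {K : Type*} [Field K] [IsAlgClosed K] (t : K) :
    ∃ m : K, m ≠ 0 ∧ m + m⁻¹ = t := by
  open Polynomial in
  obtain ⟨m, hm⟩ := IsAlgClosed.exists_root (C 1 * X ^ 2 + C (-t) * X + C 1)
    (by rw [degree_quadratic one_ne_zero]; decide)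
  have hquad : m ^ 2 - t * m + 1 = 0 := by
    simpa [sub_eq_add_neg] using hm
  have hm0 : m ≠ 0 := by
    rintro rfl
    simp at hquad
  exact ⟨m, hm0, by field_simp; linear_combination hquad⟩

theorem sub_mul_sub_eq_of_add_inv_eq_trace {K : Type*} [Field K]
    (g : Matrix (Fin 2) (Fin 2) K) (hdet : g.det = 1) {m : K} (hm : m ≠ 0)
    (htr : m + m⁻¹ = g.trace) :
    (m - g 0 0) * (m - g 1 1) = g 0 1 * g 1 0 := by
  rw [det_fin_two] at hdet
  rw [trace_fin_two] at htr
  field_simp at htr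
  linear_combination htr + hdet

theorem eq_tau_of_add_inv_eq_trace (g : Matrix (Fin 2) (Fin 2) ℂ) {m : ℂ}
    (htr : m + m⁻¹ = g.trace) (hchar : (m - g 0 0) * (m - g 1 1) = g 0 1 * g 1 0)
    (h12 : g 0 1 ≠ 0) (hm : m - g 0 0 ≠ 0) :
    g = tau (g 0 0) (g 0 1 / (m - g 0 0)) m := by
  rw [trace_fin_two] at htr
  have hinv : m⁻¹ = g 0 0 + g 1 1 - m := by linear_combination htr
  ext i j
  fin_cases i <;> fin_cases j <;> simp only [tau, hinv, of_apply, cons_val', cons_val_zero,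
    cons_val_one, empty_val', cons_val_fin_one, Fin.zero_eta, Fin.mk_one]
  · rw [neg_sub]
    field_simp
  · field_simp
    linear_combination -hchar
  · ring

theorem stmt_4 (g : Matrix (Fin 2) (Fin 2) ℂ) (hdet : g.det = 1)
    (h11 : g 0 0 ≠ 0) (h12 : g 0 1 ≠ 0) (h21 : g 1 0 ≠ 0) :
    ∃ a b m : ℂ, a ≠ 0 ∧ b ≠ 0 ∧ m ≠ 0 ∧ g = tau a b m ∧ a = g 0 0 := by
  obtain ⟨m, hm0, htr⟩ := exists_ne_zero_add_inv_eq g.trace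
  have hchar := sub_mul_sub_eq_of_add_inv_eq_trace g hdet hm0 htr
  have hm : m - g 0 0 ≠ 0 := left_ne_zero_of_mul (hchar ▸ mul_ne_zero h12 h21)
  exact ⟨g 0 0, g 0 1 / (m - g 0 0), m, h11, div_ne_zero h12 hm, hm0,
    eq_tau_of_add_inv_eq_trace g htr hchar h12 hm, rfl⟩
end

section
/- Let u ∈ ℂ² be a column vector with first coordinate nonzero, Û = [[u¹, 0], [u², 1]], and suppose g = Û · τ(a,b,m) · Û⁻¹ for nonzero complex numbers a, b, m. Let v be a nonzero row vector with v·g = m⁻¹·v, and suppose v·u ≠ 0. If the m⁻¹-eigenspace of left multiplication by g on row vectors is one-dimensional, then b = -(v·e₂)/(v·u). -/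
open Matrix

/-!
In the coordinates of `Û` the row vector `x = (1, -b)` is an `m⁻¹`-eigenvector of `τ(a,b,m)`, so
`x Û⁻¹` is an `m⁻¹`-eigenvector of `g`, hence equals `c v`. Since `Û e₁ = u` and `Û e₂ = e₂`,
pairing `x Û⁻¹` with `u` and with `e₂` gives `c (v·u) = 1` and `c (v·e₂) = -b`.
-/

lemma vecMul_tau_eq_inv_smul {a b m : ℂ} (hb : b ≠ 0) :
    ![1, -b] ᵥ* tau a b m = m⁻¹ • ![1, -b] := by
  ext j
  fin_cases j <;> simp [tau, vecMul, dotProduct, Fin.sum_univ_two] <;> grind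

namespace Matrix

variable {n R : Type*} [Fintype n] [DecidableEq n] [CommRing R] {P : Matrix n n R}

lemma vecMul_nonsing_inv_vecMul_conj {A : Matrix n n R} (hP : IsUnit P.det) {x : n → R} {μ : R}
    (hx : x ᵥ* A = μ • x) : (x ᵥ* P⁻¹) ᵥ* (P * A * P⁻¹) = μ • (x ᵥ* P⁻¹) := by
  rw [vecMul_vecMul, ← mul_assoc, ← mul_assoc, nonsing_inv_mul _ hP, one_mul, ← vecMul_vecMul,
    hx, smul_vecMul]

lemma vecMul_nonsing_inv_dotProduct_mulVec (hP : IsUnit P.det) (x y : n → R) :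
    (x ᵥ* P⁻¹) ⬝ᵥ (P *ᵥ y) = x ⬝ᵥ y := by
  rw [dotProduct_mulVec, vecMul_vecMul, nonsing_inv_mul _ hP, vecMul_one]

end Matrix

theorem stmt_6_general (u : Fin 2 → ℂ) (hu : u 0 ≠ 0) (a b m : ℂ)
    (hb : b ≠ 0)
    (g : Matrix (Fin 2) (Fin 2) ℂ)
    (hg : g = !![u 0, 0; u 1, 1] * tau a b m * (!![u 0, 0; u 1, 1])⁻¹)
    (v : Fin 2 → ℂ)
    (hvu : v ⬝ᵥ u ≠ 0)
    (hone : ∀ w : Fin 2 → ℂ, w ᵥ* g = m⁻¹ • w → ∃ c : ℂ, w = c • v) :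
    b = -(v 1) / (v ⬝ᵥ u) := by
  set U : Matrix (Fin 2) (Fin 2) ℂ := !![u 0, 0; u 1, 1]
  have hU : IsUnit U.det := by simpa [U, det_fin_two_of] using hu
  obtain ⟨c, hc⟩ := hone _ (hg ▸ vecMul_nonsing_inv_vecMul_conj hU (vecMul_tau_eq_inv_smul hb))
  have hcu : c * (v ⬝ᵥ u) = 1 := by
    have h := vecMul_nonsing_inv_dotProduct_mulVec hU ![1, -b] ![1, 0]
    rw [hc, smul_dotProduct] at h
    simpa [U, mulVec, dotProduct, Fin.sum_univ_two] using h
  have hcv : c * v 1 = -b := by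
    have h := vecMul_nonsing_inv_dotProduct_mulVec hU ![1, -b] ![0, 1]
    rw [hc, smul_dotProduct] at h
    simpa [U, mulVec, dotProduct, Fin.sum_univ_two] using h
  rw [eq_div_iff hvu]
  linear_combination (-(v 1)) * hcu + (v ⬝ᵥ u) * hcv

theorem stmt_6 (u : Fin 2 → ℂ) (hu : u 0 ≠ 0) (a b m : ℂ)
    (ha : a ≠ 0) (hb : b ≠ 0) (hm : m ≠ 0)
    (g : Matrix (Fin 2) (Fin 2) ℂ)
    (hg : g = !![u 0, 0; u 1, 1] * tau a b m * (!![u 0, 0; u 1, 1])⁻¹)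
    (v : Fin 2 → ℂ) (hv : v ≠ 0) (hev : v ᵥ* g = m⁻¹ • v)
    (hvu : v ⬝ᵥ u ≠ 0)
    (hone : ∀ w : Fin 2 → ℂ, w ᵥ* g = m⁻¹ • w → ∃ c : ℂ, w = c • v) :
    b = -(v 1) / (v ⬝ᵥ u) :=
  stmt_6_general u hu a b m hb g hg v hvu hone
end

section
/- Suppose u ∈ ℂ² has nonzero first coordinate, g = Û · τ(a,b,m) · Û⁻¹ for nonzero a, b, m, where Û = [[u¹,0],[u²,1]]. Then g·u = Û · U(a,b,m) · e₁, where U(a,b,m) = [[a, 0], [(a-1/m)/b, 1]]. -/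
open Matrix

noncomputable def Umat (a b m : ℂ) : Matrix (Fin 2) (Fin 2) ℂ :=
  !![a, 0; (a - m⁻¹) / b, 1]

/-! The matrix `Û = [[u¹, 0], [u², 1]]` sends `e₁` to `u`, so `Û⁻¹ u = e₁` and `g u = Û τ e₁`;
and `τ e₁ = U e₁` because `τ` and `U` have the same first column. -/

theorem Matrix.mul_mul_inv_mulVec_of_mulVec_eq {n R : Type*} [Fintype n] [DecidableEq n]
    [CommRing R] {P : Matrix n n R} (hP : IsUnit P.det) (A : Matrix n n R) {v w : n → R}
    (hv : P *ᵥ v = w) :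
    (P * A * P⁻¹) *ᵥ w = P *ᵥ (A *ᵥ v) := by
  rw [← hv, mulVec_mulVec, Matrix.mul_assoc, Matrix.mul_assoc, nonsing_inv_mul P hP,
    Matrix.mul_one, ← mulVec_mulVec]

theorem lowerUnitriangular_mulVec_e₁ {R : Type*} [CommSemiring R] (u : Fin 2 → R) :
    !![u 0, 0; u 1, 1] *ᵥ ![1, 0] = u := by
  ext i; fin_cases i <;> simp

theorem tau_mulVec_e₁ (a b m : ℂ) : tau a b m *ᵥ ![1, 0] = Umat a b m *ᵥ ![1, 0] := by
  ext i; fin_cases i <;> simp [tau, Umat]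

theorem stmt_8_general (u : Fin 2 → ℂ) (hu : u 0 ≠ 0) (a b m : ℂ)
    (g : Matrix (Fin 2) (Fin 2) ℂ)
    (hg : g = !![u 0, 0; u 1, 1] * tau a b m * (!![u 0, 0; u 1, 1])⁻¹) :
    g *ᵥ u = !![u 0, 0; u 1, 1] *ᵥ (Umat a b m *ᵥ ![1, 0]) := by
  have hdet : IsUnit (!![u 0, 0; u 1, 1] : Matrix (Fin 2) (Fin 2) ℂ).det := by
    simpa [det_fin_two_of] using hu
  rw [hg, mul_mul_inv_mulVec_of_mulVec_eq hdet _ (lowerUnitriangular_mulVec_e₁ u), tau_mulVec_e₁]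

theorem stmt_8 (u : Fin 2 → ℂ) (hu : u 0 ≠ 0) (a b m : ℂ)
    (ha : a ≠ 0) (hb : b ≠ 0) (hm : m ≠ 0)
    (g : Matrix (Fin 2) (Fin 2) ℂ)
    (hg : g = !![u 0, 0; u 1, 1] * tau a b m * (!![u 0, 0; u 1, 1])⁻¹) :
    g *ᵥ u = !![u 0, 0; u 1, 1] *ᵥ (Umat a b m *ᵥ ![1, 0]) :=
  stmt_8_general u hu a b m g hg
end

section
/- Let x₁ = (a₁,b₁,m₁) and x₂ = (a₂,b₂,m₂) be triples of nonzero complex numbers, and define A = 1 - (m₁b₁/b₂)(1 - a₁/m₁)(1 - 1/(m₂a₂)). Assume A ≠ 0 and define a₁' = a₁/A, a₂' = a₂·A, m₁' = m₁, m₂' = m₂, b₁' = (m₂b₂/m₁)·(1 - m₂a₂(1 - b₂/(m₁b₁)))⁻¹ (assuming the inverted quantity is nonzero), and b₂' = b₁·(1 - (m₁/a₁)(1 - b₂/(m₁b₁))), assumed nonzero. Then U(a₁,b₁,m₁)·U(a₂,b₂,m₂) = U(a₂',b₂',m₂')·U(a₁',b₁',m₁'). -/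
open Matrix

/-
Both sides are products of lower-triangular matrices with lower-right entry 1, so the identity
amounts to two scalar equations: the diagonal entries agree because `A` cancels, and the
lower-left entries agree once the defining formulas of `A`, `b₂'` and `1 / b₁'` are cleared of
denominators, which turns the check into a polynomial identity modulo two relations.
-/

theorem Umat_mul_Umat (a b m a' b' m' : ℂ) :
    Umat a b m * Umat a' b' m' = !![a * a', 0; (a - m⁻¹) / b * a' + (a' - m'⁻¹) / b', 1] := by
  simp [Umat]

theorem Umat_lowerLeft_eq_of_relations (a₁ b₁ m₁ a₂ b₂ m₂ A B : ℂ)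
    (hb₁ : b₁ ≠ 0) (hm₁ : m₁ ≠ 0) (hb₂ : b₂ ≠ 0) (hm₂ : m₂ ≠ 0) (hA : A ≠ 0) (hB : B ≠ 0)
    (hB_rel : a₁ * B = b₁ * (a₁ - m₁) + b₂)
    (hA_rel : A * (m₂ * a₂ * b₂) = m₂ * a₂ * a₁ * B - b₁ * (a₁ - m₁)) :
    (a₁ - m₁⁻¹) / b₁ * a₂ + (a₂ - m₂⁻¹) / b₂ =
      (a₂ * A - m₂⁻¹) / B * (a₁ / A) +
        (a₁ / A - m₁⁻¹) * (m₁ / (m₂ * b₂) + a₂ / b₁ - m₁ * a₂ / b₂) := by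
  field_simp
  linear_combination a₁ * m₁ * (m₂ * a₂ * B - b₁) * hB_rel + a₁ * m₁ * (B - b₁) * hA_rel

theorem stmt_9_general (a₁ b₁ m₁ a₂ b₂ m₂ : ℂ)
    (ha₁ : a₁ ≠ 0) (hb₁ : b₁ ≠ 0) (hm₁ : m₁ ≠ 0)
    (ha₂ : a₂ ≠ 0) (hb₂ : b₂ ≠ 0) (hm₂ : m₂ ≠ 0)
    (A : ℂ) (hA : A = 1 - (m₁ * b₁ / b₂) * (1 - a₁ / m₁) * (1 - 1 / (m₂ * a₂)))
    (hA0 : A ≠ 0)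
    (a₁' a₂' m₁' m₂' b₁' b₂' : ℂ)
    (ha₁' : a₁' = a₁ / A) (ha₂' : a₂' = a₂ * A)
    (hm₁' : m₁' = m₁) (hm₂' : m₂' = m₂)
    (hb₁' : b₁' = (m₂ * b₂ / m₁) * (1 - m₂ * a₂ * (1 - b₂ / (m₁ * b₁)))⁻¹)
    (hb₂' : b₂' = b₁ * (1 - (m₁ / a₁) * (1 - b₂ / (m₁ * b₁))))
    (hb₂'0 : b₂' ≠ 0) :
    Umat a₁ b₁ m₁ * Umat a₂ b₂ m₂ = Umat a₂' b₂' m₂' * Umat a₁' b₁' m₁' := by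
  subst a₁' a₂' m₁' m₂'
  have hb₂'_rel : a₁ * b₂' = b₁ * (a₁ - m₁) + b₂ := by
    rw [hb₂']
    field_simp
    ring
  have hA_rel : A * (m₂ * a₂ * b₂) = m₂ * a₂ * a₁ * b₂' - b₁ * (a₁ - m₁) := by
    rw [mul_assoc _ a₁, hb₂'_rel, hA]
    field_simp
    ring
  have hb₁'_inv : b₁'⁻¹ = m₁ / (m₂ * b₂) + a₂ / b₁ - m₁ * a₂ / b₂ := by
    rw [hb₁', mul_inv, inv_inv]
    field_simp
    ring
  rw [Umat_mul_Umat, Umat_mul_Umat, div_eq_mul_inv _ b₁', hb₁'_inv,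
    ← Umat_lowerLeft_eq_of_relations a₁ b₁ m₁ a₂ b₂ m₂ A b₂' hb₁ hm₁ hb₂ hm₂ hA0 hb₂'0
      hb₂'_rel hA_rel,
    show a₂ * A * (a₁ / A) = a₁ * a₂ by field_simp]

theorem stmt_9 (a₁ b₁ m₁ a₂ b₂ m₂ : ℂ)
    (ha₁ : a₁ ≠ 0) (hb₁ : b₁ ≠ 0) (hm₁ : m₁ ≠ 0)
    (ha₂ : a₂ ≠ 0) (hb₂ : b₂ ≠ 0) (hm₂ : m₂ ≠ 0)
    (A : ℂ) (hA : A = 1 - (m₁ * b₁ / b₂) * (1 - a₁ / m₁) * (1 - 1 / (m₂ * a₂)))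
    (hA0 : A ≠ 0)
    (a₁' a₂' m₁' m₂' b₁' b₂' : ℂ)
    (ha₁' : a₁' = a₁ / A) (ha₂' : a₂' = a₂ * A)
    (hm₁' : m₁' = m₁) (hm₂' : m₂' = m₂)
    (hden : 1 - m₂ * a₂ * (1 - b₂ / (m₁ * b₁)) ≠ 0)
    (hb₁' : b₁' = (m₂ * b₂ / m₁) * (1 - m₂ * a₂ * (1 - b₂ / (m₁ * b₁)))⁻¹)
    (hb₂' : b₂' = b₁ * (1 - (m₁ / a₁) * (1 - b₂ / (m₁ * b₁))))
    (hb₂'0 : b₂' ≠ 0) :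
    Umat a₁ b₁ m₁ * Umat a₂ b₂ m₂ = Umat a₂' b₂' m₂' * Umat a₁' b₁' m₁' :=
  stmt_9_general a₁ b₁ m₁ a₂ b₂ m₂ ha₁ hb₁ hm₁ ha₂ hb₂ hm₂ A hA hA0 a₁' a₂' m₁' m₂' b₁' b₂' ha₁'
    ha₂' hm₁' hm₂' hb₁' hb₂' hb₂'0
end

section
/- With the same hypotheses and definitions of the primed quantities as in the positive-crossing octahedral transformation, the down-holonomy matrices satisfy D(a₁,b₁,m₁)·D(a₂,b₂,m₂) = D(a₂',b₂',m₂')·D(a₁',b₁',m₁'), where D(a,b,m) = [[1, (a-m)b], [0, a]]. -/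
/-! The matrices `Dmat a b m` are upper triangular with `1` in the top-left corner, so a product of
two of them is determined by the product `a₁ a₂` of the bottom-right entries and by the top-right
entry `(a₂ - m₂) b₂ + (a₁ - m₁) b₁ a₂`. The bottom-right entries agree because `A` cancels in
`a₂' a₁' = a₂ A · a₁ / A`. For the top-right entries, write `A = N / (b₂ m₂ a₂)` and the
denominator of `b₁'` as `Δ / (m₁ b₁)`; once the numerators `N` and `Δ` are cleared the two sides
agree as polynomials. -/

open Matrix

noncomputable def Dmat (a b m : ℂ) : Matrix (Fin 2) (Fin 2) ℂ :=
  !![1, (a - m) * b; 0, a]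

theorem Dmat_mul_Dmat (a b m a' b' m' : ℂ) :
    Dmat a b m * Dmat a' b' m' = !![1, (a' - m') * b' + (a - m) * b * a'; 0, a * a'] := by
  simp [Dmat]

section Octahedral

variable {a₁ b₁ m₁ a₂ b₂ m₂ : ℂ}

theorem octahedral_A_eq (hm₁ : m₁ ≠ 0) (ha₂ : a₂ ≠ 0) (hb₂ : b₂ ≠ 0) (hm₂ : m₂ ≠ 0) :
    1 - (m₁ * b₁ / b₂) * (1 - a₁ / m₁) * (1 - 1 / (m₂ * a₂)) =
      (b₂ * m₂ * a₂ - b₁ * (m₁ - a₁) * (m₂ * a₂ - 1)) / (b₂ * m₂ * a₂) := by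
  field_simp

theorem octahedral_denom_eq (hb₁ : b₁ ≠ 0) (hm₁ : m₁ ≠ 0) :
    1 - m₂ * a₂ * (1 - b₂ / (m₁ * b₁)) = (m₁ * b₁ - m₂ * a₂ * (m₁ * b₁ - b₂)) / (m₁ * b₁) := by
  field_simp

theorem octahedral_upperRight {N Δ : ℂ} (ha₁ : a₁ ≠ 0) (hb₁ : b₁ ≠ 0) (hm₁ : m₁ ≠ 0)
    (ha₂ : a₂ ≠ 0) (hb₂ : b₂ ≠ 0) (hm₂ : m₂ ≠ 0)
    (hN : N = b₂ * m₂ * a₂ - b₁ * (m₁ - a₁) * (m₂ * a₂ - 1)) (hN0 : N ≠ 0)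
    (hΔ : Δ = m₁ * b₁ - m₂ * a₂ * (m₁ * b₁ - b₂)) (hΔ0 : Δ ≠ 0) :
    (a₂ - m₂) * b₂ + (a₁ - m₁) * b₁ * a₂ =
      (a₁ / (N / (b₂ * m₂ * a₂)) - m₁) * (m₂ * b₂ / m₁ * (Δ / (m₁ * b₁))⁻¹) +
      (a₂ * (N / (b₂ * m₂ * a₂)) - m₂) * (b₁ * (1 - m₁ / a₁ * (1 - b₂ / (m₁ * b₁)))) *
        (a₁ / (N / (b₂ * m₂ * a₂))) := by
  field_simp
  subst hN hΔ
  ring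

end Octahedral

theorem stmt_10_general (a₁ b₁ m₁ a₂ b₂ m₂ : ℂ)
    (ha₁ : a₁ ≠ 0) (hb₁ : b₁ ≠ 0) (hm₁ : m₁ ≠ 0)
    (ha₂ : a₂ ≠ 0) (hb₂ : b₂ ≠ 0) (hm₂ : m₂ ≠ 0)
    (A : ℂ) (hA : A = 1 - (m₁ * b₁ / b₂) * (1 - a₁ / m₁) * (1 - 1 / (m₂ * a₂)))
    (hA0 : A ≠ 0)
    (a₁' a₂' m₁' m₂' b₁' b₂' : ℂ)
    (ha₁' : a₁' = a₁ / A) (ha₂' : a₂' = a₂ * A)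
    (hm₁' : m₁' = m₁) (hm₂' : m₂' = m₂)
    (hden : 1 - m₂ * a₂ * (1 - b₂ / (m₁ * b₁)) ≠ 0)
    (hb₁' : b₁' = (m₂ * b₂ / m₁) * (1 - m₂ * a₂ * (1 - b₂ / (m₁ * b₁)))⁻¹)
    (hb₂' : b₂' = b₁ * (1 - (m₁ / a₁) * (1 - b₂ / (m₁ * b₁)))) :
    Dmat a₁ b₁ m₁ * Dmat a₂ b₂ m₂ = Dmat a₂' b₂' m₂' * Dmat a₁' b₁' m₁' := by
  subst ha₁' ha₂' hm₁' hm₂' hb₁' hb₂'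
  have h_diag : a₁ * a₂ = a₂ * A * (a₁ / A) := by field_simp
  rw [octahedral_A_eq hm₁ ha₂ hb₂ hm₂] at hA
  rw [octahedral_denom_eq hb₁ hm₁] at hden ⊢
  subst hA
  rw [Dmat_mul_Dmat, Dmat_mul_Dmat, h_diag,
    octahedral_upperRight ha₁ hb₁ hm₁ ha₂ hb₂ hm₂ rfl (div_ne_zero_iff.mp hA0).1 rfl
      (div_ne_zero_iff.mp hden).1]

theorem stmt_10 (a₁ b₁ m₁ a₂ b₂ m₂ : ℂ)
    (ha₁ : a₁ ≠ 0) (hb₁ : b₁ ≠ 0) (hm₁ : m₁ ≠ 0)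
    (ha₂ : a₂ ≠ 0) (hb₂ : b₂ ≠ 0) (hm₂ : m₂ ≠ 0)
    (A : ℂ) (hA : A = 1 - (m₁ * b₁ / b₂) * (1 - a₁ / m₁) * (1 - 1 / (m₂ * a₂)))
    (hA0 : A ≠ 0)
    (a₁' a₂' m₁' m₂' b₁' b₂' : ℂ)
    (ha₁' : a₁' = a₁ / A) (ha₂' : a₂' = a₂ * A)
    (hm₁' : m₁' = m₁) (hm₂' : m₂' = m₂)
    (hden : 1 - m₂ * a₂ * (1 - b₂ / (m₁ * b₁)) ≠ 0)
    (hb₁' : b₁' = (m₂ * b₂ / m₁) * (1 - m₂ * a₂ * (1 - b₂ / (m₁ * b₁)))⁻¹)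
    (hb₂' : b₂' = b₁ * (1 - (m₁ / a₁) * (1 - b₂ / (m₁ * b₁))))
    (hb₂'0 : b₂' ≠ 0) :
    Dmat a₁ b₁ m₁ * Dmat a₂ b₂ m₂ = Dmat a₂' b₂' m₂' * Dmat a₁' b₁' m₁' :=
  stmt_10_general a₁ b₁ m₁ a₂ b₂ m₂ ha₁ hb₁ hm₁ ha₂ hb₂ hm₂ A hA hA0 a₁' a₂' m₁' m₂' b₁' b₂' ha₁'
    ha₂' hm₁' hm₂' hden hb₁' hb₂'
end

section
/- Let v₁, …, v_k be finitely many nonzero row vectors in ℂ² and u₁, …, u_l finitely many nonzero column vectors in ℂ². Then there exist A, B ∈ SL(2,ℂ) such that for all i and j: v_i·A·e₂ ≠ 0, v_i·B·u_j ≠ 0, and det(B·u_j, A·e₂) ≠ 0, where e₂ = (0,1)ᵀ and det(x,y) is the determinant of the matrix with columns x, y. -/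
/-!
On the curve `s ↦ !![1, s; s, 1 + s ^ 2]` in `SL(2, K)` the pairing `w B u` is a quadratic in `s`
that vanishes identically only if `w = 0` or `u = 0`. Since `K` is infinite, one `s` avoids the
roots of finitely many such quadratics. This gives `A` with `v i A e₂ ≠ 0`; then
`x ↦ det2 x (A e₂)` is one more nonzero covector, and a second application gives `B`.
-/

open Matrix Polynomial

/-- determinant of the 2×2 matrix with columns x, y -/
def det2 (x y : Fin 2 → ℂ) : ℂ := x 0 * y 1 - x 1 * y 0

theorem Polynomial.exists_forall_eval_ne_zero {R ι : Type*} [CommRing R] [IsDomain R] [Infinite R]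
    [Finite ι] (p : ι → R[X]) (hp : ∀ i, p i ≠ 0) : ∃ x, ∀ i, (p i).eval x ≠ 0 := by
  obtain ⟨x, hx⟩ :=
    (Set.finite_iUnion fun i => finite_setOfPred_isRoot (hp i)).infinite_compl.nonempty
  exact ⟨x, by simpa using hx⟩

section

variable {K : Type*} [Field K]

noncomputable def pairingPoly (w u : Fin 2 → K) : K[X] :=
  C (w 1 * u 1) * X ^ 2 + C (w 0 * u 1 + w 1 * u 0) * X + C (w 0 * u 0 + w 1 * u 1)

lemma eval_pairingPoly (w u : Fin 2 → K) (s : K) :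
    (pairingPoly w u).eval s = (w ᵥ* !![1, s; s, 1 + s ^ 2]) ⬝ᵥ u := by
  simp [pairingPoly, vecMul, dotProduct, Fin.sum_univ_two]
  ring

lemma pairingPoly_ne_zero {w u : Fin 2 → K} (hw : w ≠ 0) (hu : u ≠ 0) : pairingPoly w u ≠ 0 := by
  intro h
  have hcoeff (n : ℕ) := congr(coeff $h n)
  simp only [pairingPoly, coeff_add, coeff_C_mul, coeff_X_pow, coeff_X, coeff_C, coeff_zero]
    at hcoeff
  have h2 : w 1 * u 1 = 0 := by simpa using hcoeff 2
  have h1 : w 0 * u 1 + w 1 * u 0 = 0 := by simpa using hcoeff 1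
  have h0 : w 0 * u 0 + w 1 * u 1 = 0 := by simpa using hcoeff 0
  -- `(w 0 * u 1) ^ 2 = -(w 0 * u 0) * (w 1 * u 1)`, so all four products `w a * u b` vanish.
  have h01 : w 0 * u 1 = 0 := pow_eq_zero_iff two_ne_zero |>.1 <| by
    linear_combination (w 0 * u 1) * h1 - (w 0 * u 0) * h2
  have hwu : ∀ a b, w a * u b = 0 := by
    simp only [Fin.forall_fin_two]
    exact ⟨⟨by linear_combination h0 - h2, h01⟩, ⟨by linear_combination h1 - h01, h2⟩⟩
  obtain ⟨a, ha⟩ := Function.ne_iff.1 hw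
  exact hu (funext fun b => (mul_eq_zero.1 (hwu a b)).resolve_left ha)

lemma exists_det_eq_one_forall_vecMul_dotProduct_ne_zero [Infinite K] {ι κ : Type*} [Finite ι]
    [Finite κ] (w : ι → Fin 2 → K) (u : κ → Fin 2 → K) (hw : ∀ i, w i ≠ 0) (hu : ∀ j, u j ≠ 0) :
    ∃ B : Matrix (Fin 2) (Fin 2) K, B.det = 1 ∧ ∀ i j, (w i ᵥ* B) ⬝ᵥ u j ≠ 0 := by
  obtain ⟨s, hs⟩ := exists_forall_eval_ne_zero (fun p : ι × κ => pairingPoly (w p.1) (u p.2))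
    fun p => pairingPoly_ne_zero (hw p.1) (hu p.2)
  refine ⟨!![1, s; s, 1 + s ^ 2], by simp [det_fin_two]; ring, fun i j => ?_⟩
  simpa [eval_pairingPoly] using hs (i, j)

end

lemma det2_eq_dotProduct (x y : Fin 2 → ℂ) : det2 x y = ![y 1, -y 0] ⬝ᵥ x := by
  simp [det2, dotProduct, Fin.sum_univ_two]
  ring

theorem stmt_17 (k l : ℕ) (v : Fin k → (Fin 2 → ℂ)) (u : Fin l → (Fin 2 → ℂ))
    (hv : ∀ i, v i ≠ 0) (hu : ∀ j, u j ≠ 0) :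
    ∃ A B : Matrix (Fin 2) (Fin 2) ℂ, A.det = 1 ∧ B.det = 1 ∧
      (∀ i, (v i ᵥ* A) ⬝ᵥ ![0, 1] ≠ 0) ∧
      (∀ i j, (v i ᵥ* B) ⬝ᵥ u j ≠ 0) ∧
      (∀ j, det2 (B *ᵥ u j) (A *ᵥ ![0, 1]) ≠ 0) := by
  have he₂ : (![0, 1] : Fin 2 → ℂ) ≠ 0 := fun h => by simpa using congrFun h 1
  obtain ⟨A, hA, hvA⟩ := exists_det_eq_one_forall_vecMul_dotProduct_ne_zero v
    (fun _ : Unit => ![0, 1]) hv fun _ => he₂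
  set y := A *ᵥ ![0, 1]
  have hy : ![y 1, -y 0] ≠ 0 := by
    intro h
    have hy0 : y 0 = 0 := by simpa using congrFun h 1
    have hy1 : y 1 = 0 := by simpa using congrFun h 0
    exact he₂ <| eq_zero_of_mulVec_eq_zero (M := A) (by simp [hA]) <|
      funext <| Fin.forall_fin_two.2 ⟨hy0, hy1⟩
  obtain ⟨B, hB, hvuB⟩ := exists_det_eq_one_forall_vecMul_dotProduct_ne_zero
    (Sum.elim v fun _ : Unit => ![y 1, -y 0]) u (Sum.forall.2 ⟨hv, fun _ => hy⟩) hu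
  refine ⟨A, B, hA, hB, fun i => hvA i (), fun i => hvuB (.inl i), fun j => ?_⟩
  rw [det2_eq_dotProduct, dotProduct_mulVec]
  exact hvuB (.inr ()) j
end
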